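/- Let Γ be a closed curve and f, g continuous functions on Γ satisfying |f(z) + g(z)| < |f(z)| + |g(z)| for all z ∈ Γ. Then f and g have the same winding on Γ: V(f; Γ) = V(g; Γ). -/

import Mathlib

/-!
The hypothesis ‖f + g‖ < ‖f‖ + ‖g‖ says exactly that f and g never point in the same direction,
i.e. f / g never lies on [0, ∞). Hence -(f / g) stays in the slit plane, where `arg` is continuous,
and `f = (-(f / g)) * (-g)` shows that adding `π + arg (-(f / g))` to a continuous argument of `g`
gives one of `f`. Since the curve is closed, the added term has the same value at both ends, so
the winding numbers agree.
-/

open Complex Set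

/-- `WindingAlong f γ a b m` : the winding of `f` along the curve `γ : [a,b] → ℂ`
equals `m`, expressed via a continuous branch of the argument of `f ∘ γ`. -/
def WindingAlong (f : ℂ → ℂ) (γ : ℝ → ℂ) (a b : ℝ) (m : ℤ) : Prop :=
  ∃ θ : ℝ → ℝ, ContinuousOn θ (Set.Icc a b) ∧
    (∀ t ∈ Set.Icc a b,
      f (γ t) = (‖f (γ t)‖ : ℂ) * Complex.exp (Complex.I * (θ t : ℝ))) ∧
    θ b - θ a = 2 * Real.pi * m

lemma Complex.neg_div_mem_slitPlane_of_norm_add_lt {z w : ℂ} (h : ‖z + w‖ < ‖z‖ + ‖w‖) :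
    -(z / w) ∈ slitPlane := by
  have hray : ¬SameRay ℝ z w := fun hzw => h.ne hzw.norm_add
  rw [sameRay_iff_arg_div_eq_zero, arg_eq_zero_iff] at hray
  rw [mem_slitPlane_iff, neg_re, neg_im, neg_pos, Ne, neg_eq_zero]
  by_contra! hle
  exact hray ⟨hle.1, hle.2⟩

namespace WindingAlong

variable {f g q : ℂ → ℂ} {γ : ℝ → ℂ} {a b : ℝ} {m : ℤ}

lemma neg (hg : WindingAlong g γ a b m) : WindingAlong (fun z => -g z) γ a b m := by
  obtain ⟨θ, hθc, hθ, hθm⟩ := hg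
  refine ⟨fun t => θ t + Real.pi, hθc.add continuousOn_const, fun t ht => ?_, by linarith⟩
  rw [norm_neg, ofReal_add, mul_add, exp_add, mul_comm I (Real.pi : ℂ), exp_pi_mul_I]
  linear_combination -hθ t ht

lemma of_eq_mul (hg : WindingAlong g γ a b m) (hγ : ContinuousOn γ (Icc a b))
    (hclosed : γ a = γ b) (hq : ContinuousOn q (γ '' Icc a b))
    (hslit : ∀ z ∈ γ '' Icc a b, q z ∈ slitPlane)
    (hfg : ∀ z ∈ γ '' Icc a b, f z = q z * g z) : WindingAlong f γ a b m := by
  obtain ⟨θ, hθc, hθ, hθm⟩ := hg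
  refine ⟨fun t => θ t + arg (q (γ t)), hθc.add fun t ht => ?_, fun t ht => ?_, ?_⟩
  · exact (continuousAt_arg (hslit _ (mem_image_of_mem γ ht))).comp_continuousWithinAt (x := t)
      (hq.comp hγ (mapsTo_image γ _) t ht)
  · have hpolar := norm_mul_exp_arg_mul_I (q (γ t))
    rw [hfg _ (mem_image_of_mem γ ht), norm_mul, ofReal_add, mul_add, exp_add, ofReal_mul,
      mul_comm I (arg _ : ℂ)]
    linear_combination q (γ t) * hθ t ht - ‖g (γ t)‖ * exp (I * θ t) * hpolar
  · simp only [hclosed]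
    linarith

lemma of_norm_add_lt (hg : WindingAlong g γ a b m) (hγ : ContinuousOn γ (Icc a b))
    (hclosed : γ a = γ b) (hfc : ContinuousOn f (γ '' Icc a b))
    (hgc : ContinuousOn g (γ '' Icc a b))
    (hlt : ∀ z ∈ γ '' Icc a b, ‖f z + g z‖ < ‖f z‖ + ‖g z‖) : WindingAlong f γ a b m := by
  have hslit z (hz : z ∈ γ '' Icc a b) : -(f z / g z) ∈ slitPlane :=
    neg_div_mem_slitPlane_of_norm_add_lt (hlt z hz)
  have hg0 z (hz : z ∈ γ '' Icc a b) : g z ≠ 0 := fun h0 =>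
    zero_notMem_slitPlane (by simpa [h0] using hslit z hz)
  refine hg.neg.of_eq_mul (q := fun z => -(f z / g z)) hγ hclosed (hfc.div hgc hg0).neg hslit
    fun z hz => ?_
  rw [neg_mul_neg, div_mul_cancel₀ _ (hg0 z hz)]

end WindingAlong

theorem rouche_symmetric_general (f g : ℂ → ℂ) (γ : ℝ → ℂ) (a b : ℝ)
    (hγ : ContinuousOn γ (Set.Icc a b)) (hclosed : γ a = γ b)
    (hf : ContinuousOn f (γ '' Set.Icc a b)) (hg : ContinuousOn g (γ '' Set.Icc a b))
    (hlt : ∀ z ∈ γ '' Set.Icc a b,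
      ‖f z + g z‖ < ‖f z‖ + ‖g z‖) :
    ∀ m : ℤ, WindingAlong f γ a b m ↔ WindingAlong g γ a b m := by
  have hlt' z (hz : z ∈ γ '' Icc a b) : ‖g z + f z‖ < ‖g z‖ + ‖f z‖ := by
    simpa only [add_comm] using hlt z hz
  exact fun m => ⟨fun h => h.of_norm_add_lt hγ hclosed hg hf hlt',
    fun h => h.of_norm_add_lt hγ hclosed hf hg hlt⟩

theorem rouche_symmetric (f g : ℂ → ℂ) (γ : ℝ → ℂ) (a b : ℝ) (hab : a ≤ b)
    (hγ : ContinuousOn γ (Set.Icc a b)) (hclosed : γ a = γ b)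
    (hf : ContinuousOn f (γ '' Set.Icc a b)) (hg : ContinuousOn g (γ '' Set.Icc a b))
    (hlt : ∀ z ∈ γ '' Set.Icc a b,
      ‖f z + g z‖ < ‖f z‖ + ‖g z‖) :
    ∀ m : ℤ, WindingAlong f γ a b m ↔ WindingAlong g γ a b m :=
  rouche_symmetric_general f g γ a b hγ hclosed hf hg hlt
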